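/- Let π₀ and π be probability measures on a measurable space, and let r be a real-valued function on probability measures that is concave along the segment from π₀ to π, i.e. r((1-η)·π₀ + η·π) ≥ (1-η)·r(π₀) + η·r(π) for all η ∈ [0,1]. Then for every η ∈ [0,1], the interpolated policy π_η = (1-η)·π₀ + η·π simultaneously satisfies KL(π_η ‖ π₀) ≤ η·KL(π ‖ π₀) and r(π_η) ≥ (1-η)·r(π₀) + η·r(π); that is, each point (KL(π_η‖π₀), r(π_η)) of the interpolation front lies weakly above and to the left of the corresponding point (η·KL(π‖π₀), (1-η)·r(π₀) + η·r(π)) on the diagonal. (The reward-versus-KL front of LITI is above the diagonal.) -/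
import Mathlib


open MeasureTheory
open scoped Classical ENNReal

/-- Kullback–Leibler divergence: `∫ log(dμ/dν) dμ` when `μ ≪ ν` (and the
log-density is integrable), `+∞` otherwise. -/
noncomputable def klDiv {α : Type*} [MeasurableSpace α] (μ ν : Measure α) : EReal :=
  if μ ≪ ν ∧ Integrable (fun x => Real.log (μ.rnDeriv ν x).toReal) μ then
    ((∫ x, Real.log (μ.rnDeriv ν x).toReal ∂μ : ℝ) : EReal)
  else ⊤

/-- Lower bound `t - 1 ≤ t log t` for `t ≥ 0`. -/
lemma sub_one_le_mul_log {t : ℝ} (ht : 0 ≤ t) : t - 1 ≤ t * Real.log t := by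
  rcases eq_or_lt_of_le ht with h | h
  · simp [← h]
  · have h1 : Real.log t⁻¹ ≤ t⁻¹ - 1 := Real.log_le_sub_one_of_pos (inv_pos.mpr h)
    rw [Real.log_inv] at h1
    have h2 := mul_le_mul_of_nonneg_left h1 ht
    have h3 : t * t⁻¹ = 1 := mul_inv_cancel₀ h.ne'
    nlinarith

/-- **The reward-versus-KL front of LITI is above the diagonal.**
Let `π₀` (anchor) and `π` be probability measures, and let `r` be a reward
functional that is concave along the segment from `π₀` to `π`. Then for every
`η ∈ [0,1]` the interpolated policy `π_η = (1-η)·π₀ + η·π` satisfies both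
`KL(π_η ‖ π₀) ≤ η·KL(π ‖ π₀)` and `r(π_η) ≥ (1-η)·r(π₀) + η·r(π)`. -/
theorem liti_pareto_above_diagonal {α : Type*} [MeasurableSpace α]
    (π₀ π : Measure α) [IsProbabilityMeasure π₀] [IsProbabilityMeasure π]
    (r : Measure α → ℝ)
    (hr : ∀ η : ℝ, 0 ≤ η → η ≤ 1 →
      r (ENNReal.ofReal (1 - η) • π₀ + ENNReal.ofReal η • π)
        ≥ (1 - η) * r π₀ + η * r π)
    (η : ℝ) (hη0 : 0 ≤ η) (hη1 : η ≤ 1) :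
    klDiv (ENNReal.ofReal (1 - η) • π₀ + ENNReal.ofReal η • π) π₀
        ≤ (η : EReal) * klDiv π π₀ ∧
      r (ENNReal.ofReal (1 - η) • π₀ + ENNReal.ofReal η • π)
        ≥ (1 - η) * r π₀ + η * r π := by
  refine ⟨?_, hr η hη0 hη1⟩
  have hη1' : (0 : ℝ) ≤ 1 - η := by linarith
  set μη : Measure α := ENNReal.ofReal (1 - η) • π₀ + ENNReal.ofReal η • π with hμη
  by_cases hKL : π ≪ π₀ ∧ Integrable (fun x => Real.log (π.rnDeriv π₀ x).toReal) π
  · -- finite case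
    obtain ⟨hac, hint⟩ := hKL
    set f : α → ℝ := fun x => (π.rnDeriv π₀ x).toReal with hfdef
    set g : α → ℝ := fun x => (1 - η) + η * f x with hgdef
    have hfmeas : Measurable f := (Measure.measurable_rnDeriv π π₀).ennreal_toReal
    have hgmeas : Measurable g := measurable_const.add (hfmeas.const_mul η)
    have hf0 : ∀ x, 0 ≤ f x := fun x => ENNReal.toReal_nonneg
    have hg0 : ∀ x, 0 ≤ g x := fun x => by
      have := hf0 x
      have : 0 ≤ η * f x := mul_nonneg hη0 (hf0 x)
      simp only [hgdef]; linarith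
    set G : α → ℝ≥0∞ := fun x => ENNReal.ofReal (1 - η) + ENNReal.ofReal η * π.rnDeriv π₀ x
      with hGdef
    have hGmeas : Measurable G :=
      measurable_const.add ((Measure.measurable_rnDeriv π π₀).const_mul _)
    have hμηG : μη = π₀.withDensity G := by
      have h1 : π₀.withDensity G
          = π₀.withDensity (fun _ => ENNReal.ofReal (1 - η))
            + π₀.withDensity (fun x => ENNReal.ofReal η * π.rnDeriv π₀ x) :=
        withDensity_add_right _ ((Measure.measurable_rnDeriv π π₀).const_mul _)
      have h2 : (fun x => ENNReal.ofReal η * π.rnDeriv π₀ x)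
          = (ENNReal.ofReal η) • (π.rnDeriv π₀) := rfl
      rw [h1, withDensity_const, h2,
        withDensity_smul' (ENNReal.ofReal η) _ ENNReal.ofReal_ne_top,
        Measure.withDensity_rnDeriv_eq π π₀ hac, hμη]
    have hACμη : μη ≪ π₀ := hμηG ▸ withDensity_absolutelyContinuous π₀ G
    have hfin : IsFiniteMeasure μη := by
      constructor
      rw [hμη]
      simp only [Measure.add_apply, Measure.smul_apply, smul_eq_mul, measure_univ, mul_one]
      exact ENNReal.add_lt_top.mpr ⟨ENNReal.ofReal_lt_top, ENNReal.ofReal_lt_top⟩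
    haveI := hfin
    have hG_eq : μη.rnDeriv π₀ =ᵐ[π₀] G := by
      rw [hμηG]; exact Measure.rnDeriv_withDensity π₀ hGmeas
    have hGtoReal : ∀ᵐ x ∂π₀, (μη.rnDeriv π₀ x).toReal = g x := by
      filter_upwards [hG_eq, Measure.rnDeriv_lt_top π π₀] with x hx hlt
      rw [hx, hGdef]
      rw [ENNReal.toReal_add ENNReal.ofReal_ne_top
        (ENNReal.mul_ne_top ENNReal.ofReal_ne_top hlt.ne), ENNReal.toReal_mul,
        ENNReal.toReal_ofReal hη1', ENNReal.toReal_ofReal hη0]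
    -- key pointwise convexity inequality
    have hkey : ∀ x, g x * Real.log (g x) ≤ η * (f x * Real.log (f x)) := by
      intro x
      have h := Real.convexOn_mul_log.2 (x := 1) (y := f x) (Set.mem_Ici.mpr zero_le_one)
        (Set.mem_Ici.mpr (hf0 x)) hη1' hη0 (by ring)
      simp only [hgdef]
      simpa [smul_eq_mul, Real.log_one, mul_one] using h
    -- integrability facts
    have hφf_int : Integrable (fun x => f x * Real.log (f x)) π₀ := by
      have := (integrable_rnDeriv_smul_iff hac).mpr hint
      simpa [smul_eq_mul, hfdef] using this
    have hf_int : Integrable f π₀ := Measure.integrable_toReal_rnDeriv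
    have hφg_int : Integrable (fun x => g x * Real.log (g x)) π₀ := by
      refine Integrable.mono'
        (((hf_int.sub (integrable_const 1)).abs.const_mul η).add (hφf_int.abs.const_mul η))
        ((hgmeas.mul (Real.measurable_log.comp hgmeas)).aestronglyMeasurable) ?_
      refine Filter.Eventually.of_forall fun x => ?_
      rw [Real.norm_eq_abs, abs_le]
      constructor
      · have hlow : g x - 1 ≤ g x * Real.log (g x) := sub_one_le_mul_log (hg0 x)
        have hgx : g x - 1 = η * (f x - 1) := by simp only [hgdef]; ring
        have h1 : -(η * |f x - 1|) ≤ g x - 1 := by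
          rw [hgx]
          have := neg_abs_le (f x - 1)
          nlinarith [abs_nonneg (f x - 1)]
        have h2 : (0:ℝ) ≤ η * |f x * Real.log (f x)| :=
          mul_nonneg hη0 (abs_nonneg _)
        simp only [Pi.add_apply, Pi.sub_apply]
        linarith [hlow, h1]
      · have h1 : η * (f x * Real.log (f x)) ≤ η * |f x * Real.log (f x)| :=
          mul_le_mul_of_nonneg_left (le_abs_self _) hη0
        have h2 : (0:ℝ) ≤ η * |f x - 1| := mul_nonneg hη0 (abs_nonneg _)
        simp only [Pi.add_apply, Pi.sub_apply]
        linarith [hkey x]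
    -- integrability of the log-density of μη w.r.t. μη
    have hlogg_int : Integrable (fun x => Real.log (g x)) μη := by
      refine (integrable_rnDeriv_smul_iff hACμη).mp ?_
      refine hφg_int.congr ?_
      filter_upwards [hGtoReal] with x hx
      rw [smul_eq_mul, hx]
    have hGtoRealμη : ∀ᵐ x ∂μη, (μη.rnDeriv π₀ x).toReal = g x :=
      hGtoReal.filter_mono hACμη.ae_le
    have hint2 : Integrable (fun x => Real.log (μη.rnDeriv π₀ x).toReal) μη := by
      refine hlogg_int.congr ?_
      filter_upwards [hGtoRealμη] with x hx
      rw [hx]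
    -- the integral inequality
    have hstep1 : ∫ x, Real.log (μη.rnDeriv π₀ x).toReal ∂μη
        = ∫ x, g x * Real.log (g x) ∂π₀ := by
      have e1 : ∫ x, Real.log (μη.rnDeriv π₀ x).toReal ∂μη = ∫ x, Real.log (g x) ∂μη :=
        integral_congr_ae (by filter_upwards [hGtoRealμη] with x hx; rw [hx])
      have e2 : ∫ x, (μη.rnDeriv π₀ x).toReal • Real.log (g x) ∂π₀
          = ∫ x, Real.log (g x) ∂μη := integral_rnDeriv_smul hACμη
      have e3 : ∫ x, (μη.rnDeriv π₀ x).toReal • Real.log (g x) ∂π₀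
          = ∫ x, g x * Real.log (g x) ∂π₀ :=
        integral_congr_ae (by filter_upwards [hGtoReal] with x hx; rw [smul_eq_mul, hx])
      rw [e1, ← e2, e3]
    have hstep2 : ∫ x, g x * Real.log (g x) ∂π₀
        ≤ η * ∫ x, Real.log (π.rnDeriv π₀ x).toReal ∂π := by
      have hmono : ∫ x, g x * Real.log (g x) ∂π₀
          ≤ ∫ x, η * (f x * Real.log (f x)) ∂π₀ :=
        integral_mono hφg_int (hφf_int.const_mul η) hkey
      have e4 : ∫ x, f x * Real.log (f x) ∂π₀
          = ∫ x, Real.log (π.rnDeriv π₀ x).toReal ∂π := by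
        have := integral_rnDeriv_smul hac
          (f := fun x => Real.log (π.rnDeriv π₀ x).toReal)
        simpa [smul_eq_mul, hfdef] using this
      rw [integral_const_mul, e4] at hmono
      exact hmono
    rw [klDiv, klDiv, if_pos ⟨hACμη, hint2⟩, if_pos ⟨hac, hint⟩, ← EReal.coe_mul,
      EReal.coe_le_coe_iff]
    rw [hstep1]
    exact hstep2
  · -- infinite case
    have hKLtop : klDiv π π₀ = ⊤ := by rw [klDiv, if_neg hKL]
    rcases eq_or_lt_of_le hη0 with h0 | h0
    · -- η = 0
      have hμη0 : μη = π₀ := by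
        rw [hμη, ← h0]
        simp
      have hself := Measure.rnDeriv_self π₀
      have hlog0 : ∀ᵐ x ∂π₀, Real.log (π₀.rnDeriv π₀ x).toReal = 0 := by
        filter_upwards [hself] with x hx; rw [hx]; simp
      have hint0 : Integrable (fun x => Real.log (π₀.rnDeriv π₀ x).toReal) π₀ :=
        (integrable_const (0:ℝ)).congr (hlog0.mono fun x hx => hx.symm)
      have hintval : ∫ x, Real.log (π₀.rnDeriv π₀ x).toReal ∂π₀ = 0 := by
        rw [integral_congr_ae hlog0, integral_zero]
      have hkl0 : klDiv π₀ π₀ = 0 := by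
        rw [klDiv, if_pos ⟨Measure.AbsolutelyContinuous.rfl, hint0⟩, hintval]; rfl
      rw [hμη0, hkl0, ← h0]
      simp
    · -- 0 < η
      rw [hKLtop, EReal.mul_top_of_pos (by exact_mod_cast h0)]
      exact le_top
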